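/- In any 2-dimensional C-WMMG with n players, the number of minimal winning coalitions is at most n + 1. -/
import Mathlib


/-- Competitive power of a coalition in a 2-dimensional C-WMMG with weights `w1, w2`. -/
def q {P : Type*} [DecidableEq P] (w1 w2 : P → ℕ) (C : Finset P) : ℕ :=
  C.sup w1 + C.sup w2

/-- A coalition is winning iff its power exceeds that of its complement. -/
def Winning {P : Type*} [Fintype P] [DecidableEq P] (w1 w2 : P → ℕ) (C : Finset P) : Prop :=
  q w1 w2 Cᶜ < q w1 w2 C

/-- A minimal winning coalition: winning, and every proper subset is losing. -/
def MWC {P : Type*} [Fintype P] [DecidableEq P] (w1 w2 : P → ℕ) (C : Finset P) : Prop :=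
  Winning w1 w2 C ∧ ∀ D ⊂ C, ¬ Winning w1 w2 D

/-- `Aset w C` is the set of members of `C` whose `w`-weight attains the maximum over `C`. -/
def Aset {P : Type*} [DecidableEq P] (w : P → ℕ) (C : Finset P) : Finset P :=
  C.filter (fun j => w j = C.sup w)

namespace CWMMG
set_option linter.unusedSectionVars false

open Finset

variable {P : Type*} [Fintype P] [DecidableEq P]

/-- global maximum of a weight function -/
def MM (w : P → ℕ) : ℕ := Finset.univ.sup w

/-- set of argmaxes of `w` over all players -/
def AA (w : P → ℕ) : Finset P := Finset.univ.filter (fun j => w j = MM w)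

/-- the "forced core" at level `b` -/
def KK (w1 w2 : P → ℕ) (b : ℕ) : Finset P :=
  Finset.univ.filter (fun j => MM w1 + b ≤ w1 j + MM w2)

lemma le_MM (w : P → ℕ) (j : P) : w j ≤ MM w := Finset.le_sup (mem_univ j)

lemma sup_le_MM (w : P → ℕ) (C : Finset P) : C.sup w ≤ MM w :=
  Finset.sup_mono (subset_univ C)

lemma mem_AA {w : P → ℕ} {j : P} : j ∈ AA w ↔ w j = MM w := by
  simp [AA]

lemma mem_KK {w1 w2 : P → ℕ} {b : ℕ} {j : P} :
    j ∈ KK w1 w2 b ↔ MM w1 + b ≤ w1 j + MM w2 := by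
  simp [KK]

lemma q_comm (w1 w2 : P → ℕ) (C : Finset P) : q w2 w1 C = q w1 w2 C :=
  Nat.add_comm _ _

lemma winning_comm {w1 w2 : P → ℕ} {C : Finset P} :
    Winning w2 w1 C ↔ Winning w1 w2 C := by
  unfold Winning; rw [q_comm w1 w2 Cᶜ, q_comm w1 w2 C]

lemma mwc_comm {w1 w2 : P → ℕ} {C : Finset P} :
    MWC w2 w1 C ↔ MWC w1 w2 C := by
  unfold MWC
  simp only [winning_comm]

lemma winning_nonempty {w1 w2 : P → ℕ} {C : Finset P} (h : Winning w1 w2 C) :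
    C.Nonempty := by
  rcases C.eq_empty_or_nonempty with rfl | h'
  · simp [Winning, q] at h
  · exact h'

section Type1

variable {w1 w2 : P → ℕ} {C : Finset P}
variable (hm : MWC w1 w2 C) (h1 : AA w1 ⊆ C) (h2 : ¬ AA w2 ⊆ C)

include hm in
lemma univ_ne : (Finset.univ : Finset P).Nonempty := by
  obtain ⟨x, _⟩ := winning_nonempty hm.1
  exact ⟨x, mem_univ x⟩

lemma AA_ne (hu : (Finset.univ : Finset P).Nonempty) (w : P → ℕ) : (AA w).Nonempty := by
  obtain ⟨j, _, hj⟩ := Finset.exists_mem_eq_sup univ hu w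
  exact ⟨j, mem_AA.2 hj.symm⟩

include hm h1 in
lemma sup1_eq : C.sup w1 = MM w1 := by
  refine le_antisymm (sup_le_MM w1 C) ?_
  obtain ⟨a, ha⟩ := AA_ne (univ_ne hm) w1
  calc MM w1 = w1 a := (mem_AA.1 ha).symm
    _ ≤ C.sup w1 := Finset.le_sup (h1 ha)

include h2 in
lemma csup2_eq : Cᶜ.sup w2 = MM w2 := by
  refine le_antisymm (sup_le_MM w2 _) ?_
  obtain ⟨a, haA, haC⟩ := not_subset.1 h2
  calc MM w2 = w2 a := (mem_AA.1 haA).symm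
    _ ≤ Cᶜ.sup w2 := Finset.le_sup (mem_compl.2 haC)

include hm h1 h2 in
lemma key_win : Cᶜ.sup w1 + MM w2 < MM w1 + C.sup w2 := by
  have h := hm.1
  unfold Winning q at h
  rw [csup2_eq h2] at h
  rw [sup1_eq hm h1] at h
  exact h

include hm h1 h2 in
lemma K_sub : KK w1 w2 (C.sup w2) ⊆ C := by
  intro j hj
  by_contra hjC
  have h1' : w1 j ≤ Cᶜ.sup w1 := Finset.le_sup (mem_compl.2 hjC)
  have h2' := mem_KK.1 hj
  have := key_win hm h1 h2
  omega

lemma AA_sub_K : AA w1 ⊆ KK w1 w2 (C.sup w2) := by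
  intro j hj
  rw [mem_AA] at hj
  rw [mem_KK, hj]
  have := sup_le_MM w2 C
  omega

include hm h1 h2 in
lemma erase_contra {j z : P} (hj : j ∈ C) (hjK : j ∉ KK w1 w2 (C.sup w2))
    (hz : z ∈ C) (hzj : z ≠ j) (hzb : w2 z = C.sup w2) : False := by
  set b := C.sup w2 with hb
  have hjb : ¬ (MM w1 + b ≤ w1 j + MM w2) := fun h => hjK (mem_KK.2 h)
  have hDwin : Winning w1 w2 (C.erase j) := by
    have hsup1 : (C.erase j).sup w1 = MM w1 := by
      refine le_antisymm (sup_le_MM _ _) ?_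
      obtain ⟨a, ha⟩ := AA_ne (univ_ne hm) w1
      have haj : a ≠ j := by
        intro h; exact hjK (h ▸ AA_sub_K ha)
      calc MM w1 = w1 a := (mem_AA.1 ha).symm
        _ ≤ (C.erase j).sup w1 := Finset.le_sup (mem_erase.2 ⟨haj, h1 ha⟩)
    have hsup2 : (C.erase j).sup w2 = b := by
      refine le_antisymm (le_trans (Finset.sup_mono (erase_subset j C)) le_rfl) ?_
      calc b = w2 z := hzb.symm
        _ ≤ (C.erase j).sup w2 := Finset.le_sup (mem_erase.2 ⟨hzj, hz⟩)
    have hcompl : (C.erase j)ᶜ = insert j Cᶜ := Finset.compl_erase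
    unfold Winning q
    rw [hsup1, hsup2, hcompl, Finset.sup_insert, Finset.sup_insert]
    have e2 : w2 j ⊔ Cᶜ.sup w2 ≤ MM w2 := by
      exact sup_le_iff.2 ⟨le_MM w2 j, sup_le_MM w2 _⟩
    have e1 : w1 j ⊔ Cᶜ.sup w1 + MM w2 < MM w1 + b := by
      have hk := key_win hm h1 h2
      rw [← hb] at hk
      rcases max_cases (w1 j) (Cᶜ.sup w1) with ⟨hmax, _⟩ | ⟨hmax, _⟩ <;> rw [hmax] <;> omega
    calc w1 j ⊔ Cᶜ.sup w1 + (w2 j ⊔ Cᶜ.sup w2) ≤ w1 j ⊔ Cᶜ.sup w1 + MM w2 := by omega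
      _ < MM w1 + b := e1
  exact hm.2 _ (Finset.erase_ssubset hj) hDwin

include hm h1 h2 in
lemma extra_val {j : P} (hj : j ∈ C) (hjK : j ∉ KK w1 w2 (C.sup w2)) :
    w2 j = C.sup w2 := by
  by_contra hne
  obtain ⟨z, hz, hzb⟩ := Finset.exists_mem_eq_sup C (winning_nonempty hm.1) w2
  have hzj : z ≠ j := fun h => hne (by rw [← h, hzb])
  exact erase_contra hm h1 h2 hj hjK hz hzj hzb.symm

include hm h1 h2 in
lemma extra_unique {j j' : P} (hj : j ∈ C) (hjK : j ∉ KK w1 w2 (C.sup w2))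
    (hj' : j' ∈ C) (hjK' : j' ∉ KK w1 w2 (C.sup w2)) : j = j' := by
  by_contra hne
  exact erase_contra hm h1 h2 hj' hjK' hj hne (extra_val hm h1 h2 hj hjK)

include hm h1 h2 in
lemma K_not_win (hX : C ≠ KK w1 w2 (C.sup w2)) : ¬ Winning w1 w2 (KK w1 w2 (C.sup w2)) := by
  have hsub := K_sub hm h1 h2
  exact hm.2 _ (lt_of_le_of_ne hsub (fun h => hX h.symm))


include hm h1 h2 in
lemma struct_of {y : P} (hyC : y ∈ C) (hyK : y ∉ KK w1 w2 (C.sup w2)) :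
    C = insert y (KK w1 w2 (C.sup w2)) := by
  ext j
  constructor
  · intro hj
    by_cases hjK : j ∈ KK w1 w2 (C.sup w2)
    · exact mem_insert_of_mem hjK
    · rw [extra_unique hm h1 h2 hj hjK hyC hyK]; exact mem_insert_self _ _
  · intro hj
    rcases mem_insert.1 hj with rfl | hj
    · exact hyC
    · exact K_sub hm h1 h2 hj

include hm h1 h2 in
lemma extra_struct (hX : C ≠ KK w1 w2 (C.sup w2)) :
    ∃ y, y ∈ C ∧ y ∉ KK w1 w2 (C.sup w2) ∧ w2 y = C.sup w2 ∧
      C = insert y (KK w1 w2 (C.sup w2)) := by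
  have hsub := K_sub hm h1 h2
  obtain ⟨y, hyC, hyK⟩ := Finset.exists_of_ssubset (lt_of_le_of_ne hsub (fun h => hX h.symm))
  refine ⟨y, hyC, hyK, extra_val hm h1 h2 hyC hyK, ?_⟩
  ext j
  constructor
  · intro hj
    by_cases hjK : j ∈ KK w1 w2 (C.sup w2)
    · exact mem_insert_of_mem hjK
    · rw [extra_unique hm h1 h2 hj hjK hyC hyK]; exact mem_insert_self _ _
  · intro hj
    rcases mem_insert.1 hj with rfl | hj
    · exact hyC
    · exact hsub hj

end Type1


section Global

variable {w1 w2 : P → ℕ}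

lemma KK_anti {b b' : ℕ} (h : b ≤ b') : KK w1 w2 b' ⊆ KK (P := P) w1 w2 b := by
  intro j hj
  rw [mem_KK] at hj ⊢
  omega

lemma E_unique {C C' : Finset P}
    (hm : MWC w1 w2 C) (h1 : AA w1 ⊆ C) (h2 : ¬ AA w2 ⊆ C)
    (hE : C = KK w1 w2 (C.sup w2))
    (hm' : MWC w1 w2 C') (h1' : AA w1 ⊆ C') (h2' : ¬ AA w2 ⊆ C')
    (hE' : C' = KK w1 w2 (C'.sup w2)) : C = C' := by
  rcases le_total (C.sup w2) (C'.sup w2) with h | h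
  · have hsub : C' ⊆ C := by
      rw [hE, hE']; exact KK_anti h
    rcases lt_or_eq_of_le hsub with hss | heq
    · exact absurd hm'.1 (hm.2 _ hss)
    · exact heq.symm
  · have hsub : C ⊆ C' := by
      rw [hE, hE']; exact KK_anti h
    rcases lt_or_eq_of_le hsub with hss | heq
    · exact absurd hm.1 (hm'.2 _ hss)
    · exact heq

lemma KK_MM : KK (P := P) w1 w2 (MM w2) = AA w1 := by
  ext j
  rw [mem_KK, mem_AA]
  have := le_MM w1 j
  omega

lemma union_win (hu : (Finset.univ : Finset P).Nonempty) (hpos : 0 < MM w1 + MM w2) :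
    Winning w1 w2 (AA w1 ∪ AA w2) := by
  obtain ⟨a1, ha1⟩ := AA_ne hu w1
  obtain ⟨a2, ha2⟩ := AA_ne hu w2
  have hq : q w1 w2 (AA w1 ∪ AA w2) = MM w1 + MM w2 := by
    unfold q
    have e1 : (AA w1 ∪ AA w2).sup w1 = MM w1 :=
      le_antisymm (sup_le_MM _ _)
        ((mem_AA.1 ha1) ▸ Finset.le_sup (mem_union_left _ ha1))
    have e2 : (AA w1 ∪ AA w2).sup w2 = MM w2 :=
      le_antisymm (sup_le_MM _ _)
        ((mem_AA.1 ha2) ▸ Finset.le_sup (mem_union_right _ ha2))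
    rw [e1, e2]
  unfold Winning
  rw [hq]
  unfold q
  rcases Nat.eq_zero_or_pos (MM w1) with hM1 | hM1
  · have hM2 : 0 < MM w2 := by omega
    have e1 : (AA w1 ∪ AA w2)ᶜ.sup w1 = 0 := by
      have := sup_le_MM w1 (AA w1 ∪ AA w2)ᶜ
      omega
    have e2 : (AA w1 ∪ AA w2)ᶜ.sup w2 < MM w2 := by
      rw [Finset.sup_lt_iff hM2]
      intro j hj
      have hj2 : j ∉ AA w2 := fun h => (mem_compl.1 hj) (mem_union_right _ h)
      have := le_MM w2 j
      rcases lt_or_eq_of_le this with h | h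
      · exact h
      · exact absurd (mem_AA.2 h) hj2
    omega
  · have e1 : (AA w1 ∪ AA w2)ᶜ.sup w1 < MM w1 := by
      rw [Finset.sup_lt_iff hM1]
      intro j hj
      have hj1 : j ∉ AA w1 := fun h => (mem_compl.1 hj) (mem_union_left _ h)
      have := le_MM w1 j
      rcases lt_or_eq_of_le this with h | h
      · exact h
      · exact absurd (mem_AA.2 h) hj1
    have e2 : (AA w1 ∪ AA w2)ᶜ.sup w2 ≤ MM w2 := sup_le_MM _ _
    omega

end Global

end CWMMG
open Finset CWMMG in
/-- In any 2-dimensional C-WMMG with `n` players, the number of minimal winning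
coalitions is at most `n + 1`. -/
theorem card_mwc_le {P : Type*} [Fintype P] [DecidableEq P] (w1 w2 : P → ℕ) :
    {C : Finset P | MWC w1 w2 C}.ncard ≤ Fintype.card P + 1 := by
  classical
  have hset : {C : Finset P | MWC w1 w2 C} =
      ↑((Finset.univ : Finset (Finset P)).filter (fun C => MWC w1 w2 C)) := by
    ext C; simp
  rw [hset, Set.ncard_coe_finset]
  set S : Finset (Finset P) := (Finset.univ).filter (fun C => MWC w1 w2 C) with hSdef
  have memS : ∀ {C : Finset P}, C ∈ S ↔ MWC w1 w2 C := by
    intro C; simp [hSdef]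
  rcases S.eq_empty_or_nonempty with hSe | hSne
  · simp [hSe]
  obtain ⟨Cw, hCw⟩ := hSne
  have hu : (Finset.univ : Finset P).Nonempty := univ_ne (memS.1 hCw)
  haveI hne : Nonempty P := ⟨hu.choose⟩
  -- the five classes
  set S0 := S.filter (fun C => AA w1 ⊆ C ∧ AA w2 ⊆ C) with hS0def
  set S1e := S.filter (fun C => (AA w1 ⊆ C ∧ ¬ AA w2 ⊆ C) ∧ C = KK w1 w2 (C.sup w2)) with hS1edef
  set S1x := S.filter (fun C => (AA w1 ⊆ C ∧ ¬ AA w2 ⊆ C) ∧ C ≠ KK w1 w2 (C.sup w2)) with hS1xdef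
  set S2e := S.filter (fun C => (AA w2 ⊆ C ∧ ¬ AA w1 ⊆ C) ∧ C = KK w2 w1 (C.sup w1)) with hS2edef
  set S2x := S.filter (fun C => (AA w2 ⊆ C ∧ ¬ AA w1 ⊆ C) ∧ C ≠ KK w2 w1 (C.sup w1)) with hS2xdef
  -- covering
  have hcover : S ⊆ S0 ∪ S1e ∪ S1x ∪ S2e ∪ S2x := by
    intro C hC
    have hmwc : MWC w1 w2 C := memS.1 hC
    have hF0 : AA w1 ⊆ C ∨ AA w2 ⊆ C := by
      by_contra hcon
      push_neg at hcon
      obtain ⟨a1, ha1, ha1C⟩ := not_subset.1 hcon.1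
      obtain ⟨a2, ha2, ha2C⟩ := not_subset.1 hcon.2
      have e1 : MM w1 ≤ Cᶜ.sup w1 := (mem_AA.1 ha1) ▸ Finset.le_sup (mem_compl.2 ha1C)
      have e2 : MM w2 ≤ Cᶜ.sup w2 := (mem_AA.1 ha2) ▸ Finset.le_sup (mem_compl.2 ha2C)
      have hwin := hmwc.1
      unfold Winning q at hwin
      have f1 := sup_le_MM w1 C
      have f2 := sup_le_MM w2 C
      omega
    simp only [mem_union, hS0def, hS1edef, hS1xdef, hS2edef, hS2xdef, mem_filter]
    by_cases hA1 : AA w1 ⊆ C <;> by_cases hA2 : AA w2 ⊆ C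
    · exact Or.inl (Or.inl (Or.inl (Or.inl ⟨hC, hA1, hA2⟩)))
    · by_cases hK : C = KK w1 w2 (C.sup w2)
      · exact Or.inl (Or.inl (Or.inl (Or.inr ⟨hC, ⟨hA1, hA2⟩, hK⟩)))
      · exact Or.inl (Or.inl (Or.inr ⟨hC, ⟨hA1, hA2⟩, hK⟩))
    · by_cases hK : C = KK w2 w1 (C.sup w1)
      · exact Or.inl (Or.inr ⟨hC, ⟨hA2, hA1⟩, hK⟩)
      · exact Or.inr ⟨hC, ⟨hA2, hA1⟩, hK⟩
    · exact absurd hF0 (by tauto)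
  have hcard : S.card ≤ S0.card + S1e.card + S1x.card + S2e.card + S2x.card := by
    calc S.card ≤ (S0 ∪ S1e ∪ S1x ∪ S2e ∪ S2x).card := card_le_card hcover
      _ ≤ (S0 ∪ S1e ∪ S1x ∪ S2e).card + S2x.card := card_union_le _ _
      _ ≤ (S0 ∪ S1e ∪ S1x).card + S2e.card + S2x.card := by
          have := card_union_le (S0 ∪ S1e ∪ S1x) S2e; omega
      _ ≤ (S0 ∪ S1e).card + S1x.card + S2e.card + S2x.card := by
          have := card_union_le (S0 ∪ S1e) S1x; omega
      _ ≤ S0.card + S1e.card + S1x.card + S2e.card + S2x.card := by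
          have := card_union_le S0 S1e; omega
  -- S0 elements are all A1 ∪ A2
  have hS0eq : ∀ T ∈ S0, T = AA w1 ∪ AA w2 := by
    intro T hT
    rw [hS0def, mem_filter] at hT
    obtain ⟨hTS, hTA1, hTA2⟩ := hT
    have hTm := memS.1 hTS
    have hpos : 0 < MM w1 + MM w2 := by
      have hwin := hTm.1
      unfold Winning q at hwin
      have f1 := sup_le_MM w1 T
      have f2 := sup_le_MM w2 T
      omega
    have hWu := union_win hu hpos
    have hsub : AA w1 ∪ AA w2 ⊆ T := union_subset hTA1 hTA2
    rcases lt_or_eq_of_le hsub with hss | heq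
    · exact absurd hWu (hTm.2 _ hss)
    · exact heq.symm
  have hc0 : S0.card ≤ 1 := by
    refine card_le_one.2 (fun a ha b hb => ?_)
    rw [hS0eq a ha, hS0eq b hb]
  -- S1e, S2e cards
  have hc1e : S1e.card ≤ 1 := by
    refine card_le_one.2 (fun a ha b hb => ?_)
    rw [hS1edef, mem_filter] at ha hb
    exact E_unique (memS.1 ha.1) ha.2.1.1 ha.2.1.2 ha.2.2
      (memS.1 hb.1) hb.2.1.1 hb.2.1.2 hb.2.2
  have hc2e : S2e.card ≤ 1 := by
    refine card_le_one.2 (fun a ha b hb => ?_)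
    rw [hS2edef, mem_filter] at ha hb
    exact E_unique (mwc_comm.2 (memS.1 ha.1)) ha.2.1.1 ha.2.1.2 ha.2.2
      (mwc_comm.2 (memS.1 hb.1)) hb.2.1.1 hb.2.1.2 hb.2.2
  -- extras reps
  set y1 : Finset P → P := fun C =>
    if h : (C \ KK w1 w2 (C.sup w2)).Nonempty then h.choose else Classical.arbitrary P with hy1def
  set y2 : Finset P → P := fun C =>
    if h : (C \ KK w2 w1 (C.sup w1)).Nonempty then h.choose else Classical.arbitrary P with hy2def
  have y1spec : ∀ C ∈ S1x, y1 C ∈ C ∧ y1 C ∉ KK w1 w2 (C.sup w2) ∧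
      w2 (y1 C) = C.sup w2 ∧ C = insert (y1 C) (KK w1 w2 (C.sup w2)) := by
    intro C hC
    rw [hS1xdef, mem_filter] at hC
    obtain ⟨hCS, ⟨hA1, hA2⟩, hK⟩ := hC
    have hmwc := memS.1 hCS
    have hdne : (C \ KK w1 w2 (C.sup w2)).Nonempty := by
      obtain ⟨y, hyC, hyK⟩ := Finset.exists_of_ssubset
        (lt_of_le_of_ne (K_sub hmwc hA1 hA2) (fun h => hK h.symm))
      exact ⟨y, mem_sdiff.2 ⟨hyC, hyK⟩⟩
    have hy : y1 C ∈ C \ KK w1 w2 (C.sup w2) := by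
      rw [hy1def]; simp only [hdne, dif_pos]; exact hdne.choose_spec
    rw [mem_sdiff] at hy
    exact ⟨hy.1, hy.2, extra_val hmwc hA1 hA2 hy.1 hy.2, struct_of hmwc hA1 hA2 hy.1 hy.2⟩
  have y2spec : ∀ C ∈ S2x, y2 C ∈ C ∧ y2 C ∉ KK w2 w1 (C.sup w1) ∧
      w1 (y2 C) = C.sup w1 ∧ C = insert (y2 C) (KK w2 w1 (C.sup w1)) := by
    intro C hC
    rw [hS2xdef, mem_filter] at hC
    obtain ⟨hCS, ⟨hA2, hA1⟩, hK⟩ := hC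
    have hmwc := mwc_comm.2 (memS.1 hCS)
    have hdne : (C \ KK w2 w1 (C.sup w1)).Nonempty := by
      obtain ⟨y, hyC, hyK⟩ := Finset.exists_of_ssubset
        (lt_of_le_of_ne (K_sub hmwc hA2 hA1) (fun h => hK h.symm))
      exact ⟨y, mem_sdiff.2 ⟨hyC, hyK⟩⟩
    have hy : y2 C ∈ C \ KK w2 w1 (C.sup w1) := by
      rw [hy2def]; simp only [hdne, dif_pos]; exact hdne.choose_spec
    rw [mem_sdiff] at hy
    exact ⟨hy.1, hy.2, extra_val hmwc hA2 hA1 hy.1 hy.2, struct_of hmwc hA2 hA1 hy.1 hy.2⟩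
  -- injectivity of reps
  have hinj1 : Set.InjOn y1 ↑S1x := by
    intro C hC C' hC' hEq
    obtain ⟨_, _, hval, hins⟩ := y1spec C hC
    obtain ⟨_, _, hval', hins'⟩ := y1spec C' hC'
    have : C.sup w2 = C'.sup w2 := by rw [← hval, ← hval', hEq]
    rw [hins, hins', hEq, this]
  have hinj2 : Set.InjOn y2 ↑S2x := by
    intro C hC C' hC' hEq
    obtain ⟨_, _, hval, hins⟩ := y2spec C hC
    obtain ⟨_, _, hval', hins'⟩ := y2spec C' hC'
    have : C.sup w1 = C'.sup w1 := by rw [← hval, ← hval', hEq]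
    rw [hins, hins', hEq, this]
  set X1 := S1x.image y1 with hX1def
  set X2 := S2x.image y2 with hX2def
  set X := X1 ∪ X2 with hXdef
  have hX1card : X1.card = S1x.card := card_image_of_injOn hinj1
  have hX2card : X2.card = S2x.card := card_image_of_injOn hinj2
  -- properties of members of X1, X2
  have hX1prop : ∀ p ∈ X1, ¬ (MM w1 + w2 p ≤ w1 p + MM w2) ∧
      (∃ C ∈ S1x, y1 C = p ∧ w2 p = C.sup w2) := by
    intro p hp
    rw [hX1def, mem_image] at hp
    obtain ⟨C, hC, hCp⟩ := hp
    obtain ⟨_, hK, hval, _⟩ := y1spec C hC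
    refine ⟨?_, C, hC, hCp, by rw [← hCp, hval]⟩
    rw [← hCp, hval]
    exact fun h => hK (mem_KK.2 h)
  have hX2prop : ∀ p ∈ X2, ¬ (MM w2 + w1 p ≤ w2 p + MM w1) ∧
      (∃ C ∈ S2x, y2 C = p ∧ w1 p = C.sup w1) := by
    intro p hp
    rw [hX2def, mem_image] at hp
    obtain ⟨C, hC, hCp⟩ := hp
    obtain ⟨_, hK, hval, _⟩ := y2spec C hC
    refine ⟨?_, C, hC, hCp, by rw [← hCp, hval]⟩
    rw [← hCp, hval]
    exact fun h => hK (mem_KK.2 h)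
  have hdisj : Disjoint X1 X2 := by
    rw [Finset.disjoint_left]
    intro p hp1 hp2
    have := (hX1prop p hp1).1
    have := (hX2prop p hp2).1
    omega
  have hXcard : X.card = S1x.card + S2x.card := by
    rw [hXdef, card_union_of_disjoint hdisj, hX1card, hX2card]
  have hXuniv : X.card ≤ Fintype.card P := by
    rw [← Finset.card_univ]; exact card_le_card (subset_univ X)
  -- W2 : if S0 and S1e are nonempty, fresh element outside X
  have W2 : ∀ T ∈ S0, ∀ C1 ∈ S1e, ∃ z, z ∈ AA w2 ∧ z ∉ C1 ∧ z ∉ X := by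
    intro T hT C1 hC1
    rw [hS0def, mem_filter] at hT
    rw [hS1edef, mem_filter] at hC1
    obtain ⟨z, hzA, hzC⟩ := not_subset.1 hC1.2.1.2
    refine ⟨z, hzA, hzC, ?_⟩
    intro hzX
    rcases mem_union.1 hzX with hz1 | hz2
    · obtain ⟨_, D, hD, hyD, hw2⟩ := hX1prop z hz1
      have hDsup : D.sup w2 = MM w2 := by rw [← hw2, mem_AA.1 hzA]
      obtain ⟨_, _, _, hins⟩ := y1spec D hD
      rw [hS1xdef, mem_filter] at hD
      have hDeq : D = insert z (AA w1) := by
        rw [hins, hyD, hDsup, KK_MM]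
      have hDsubT : D ⊆ T := by
        rw [hDeq]
        exact insert_subset (hT.2.2 hzA) (Subset.trans hT.2.1 (Subset.refl _))
      have hDneT : D ≠ T := by
        intro h
        exact hD.2.1.2 (h ▸ hT.2.2)
      have hTm := memS.1 hT.1
      exact hTm.2 D (lt_of_le_of_ne hDsubT hDneT) (memS.1 hD.1).1
    · obtain ⟨hstar, _⟩ := hX2prop z hz2
      have := mem_AA.1 hzA
      have := le_MM w1 z
      omega
  -- W2 symmetric
  have W2' : ∀ T ∈ S0, ∀ C2 ∈ S2e, ∃ z, z ∈ AA w1 ∧ z ∉ C2 ∧ z ∉ X := by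
    intro T hT C2 hC2
    rw [hS0def, mem_filter] at hT
    rw [hS2edef, mem_filter] at hC2
    obtain ⟨z, hzA, hzC⟩ := not_subset.1 hC2.2.1.2
    refine ⟨z, hzA, hzC, ?_⟩
    intro hzX
    rcases mem_union.1 hzX with hz1 | hz2
    · obtain ⟨hstar, _⟩ := hX1prop z hz1
      have := mem_AA.1 hzA
      have := le_MM w2 z
      omega
    · obtain ⟨_, D, hD, hyD, hw1⟩ := hX2prop z hz2
      have hDsup : D.sup w1 = MM w1 := by rw [← hw1, mem_AA.1 hzA]
      obtain ⟨_, _, _, hins⟩ := y2spec D hD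
      rw [hS2xdef, mem_filter] at hD
      have hDeq : D = insert z (AA w2) := by
        rw [hins, hyD, hDsup, KK_MM]
      have hDsubT : D ⊆ T := by
        rw [hDeq]
        exact insert_subset (hT.2.1 hzA) hT.2.2
      have hDneT : D ≠ T := by
        intro h
        exact hD.2.1.2 (h ▸ hT.2.1)
      have hTm := memS.1 hT.1
      exact hTm.2 D (lt_of_le_of_ne hDsubT hDneT) (memS.1 hD.1).1
  -- W4 : if S1e and S2e nonempty, some element outside X
  have W4 : ∀ C1 ∈ S1e, ∀ C2 ∈ S2e, ∃ p, p ∉ X := by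
    intro C1 hC1 C2 hC2
    rw [hS1edef, mem_filter] at hC1
    rw [hS2edef, mem_filter] at hC2
    by_contra hcon
    push_neg at hcon
    have hm1 := memS.1 hC1.1
    have hm2 := memS.1 hC2.1
    obtain ⟨z, hzC1, hzb⟩ := Finset.exists_mem_eq_sup C1 (winning_nonempty hm1.1) w2
    obtain ⟨p, hpC2, hpa⟩ := Finset.exists_mem_eq_sup C2 (winning_nonempty hm2.1) w1
    -- z not a type-1 extra rep
    have hz2 : z ∈ X2 := by
      rcases mem_union.1 (hcon z) with hz1 | hz2
      · exfalso
        obtain ⟨_, D, hD, hyD, hw2⟩ := hX1prop z hz1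
        have hDeq : D.sup w2 = C1.sup w2 := by rw [← hw2, hzb]
        rw [hS1xdef, mem_filter] at hD
        have hKnw := K_not_win (memS.1 hD.1) hD.2.1.1 hD.2.1.2 hD.2.2
        rw [hDeq, ← hC1.2.2] at hKnw
        exact hKnw hm1.1
      · exact hz2
    have hp1 : p ∈ X1 := by
      rcases mem_union.1 (hcon p) with hp1 | hp2
      · exact hp1
      · exfalso
        obtain ⟨_, D, hD, hyD, hw1⟩ := hX2prop p hp2
        have hDeq : D.sup w1 = C2.sup w1 := by rw [← hw1, hpa]
        rw [hS2xdef, mem_filter] at hD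
        have hKnw := K_not_win (mwc_comm.2 (memS.1 hD.1)) hD.2.1.1 hD.2.1.2 hD.2.2
        rw [hDeq, ← hC2.2.2] at hKnw
        exact hKnw (winning_comm.2 hm2.1)
    have hzstar := (hX2prop z hz2).1
    have hpstar := (hX1prop p hp1).1
    rw [← hzb] at hzstar
    rw [← hpa] at hpstar
    rcases le_total (MM w2 + C2.sup w1) (MM w1 + C1.sup w2) with h | h
    · have hzK : z ∈ KK w2 w1 (C2.sup w1) := by
        rw [mem_KK]
        rw [← hzb]
        omega
      rw [← hC2.2.2] at hzK
      have : w1 z ≤ C2.sup w1 := Finset.le_sup hzK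
      omega
    · have hpK : p ∈ KK w1 w2 (C1.sup w2) := by
        rw [mem_KK]
        rw [← hpa]
        omega
      rw [← hC1.2.2] at hpK
      have : w2 p ≤ C1.sup w2 := Finset.le_sup hpK
      omega
  -- final case analysis
  rcases S1e.eq_empty_or_nonempty with h1e | ⟨C1, hC1⟩ <;>
    rcases S2e.eq_empty_or_nonempty with h2e | ⟨C2, hC2⟩
  · -- both empty
    have : S1e.card = 0 := by rw [h1e]; rfl
    have : S2e.card = 0 := by rw [h2e]; rfl
    omega
  · -- S1e empty, S2e nonempty
    have h1c : S1e.card = 0 := by rw [h1e]; rfl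
    rcases S0.eq_empty_or_nonempty with h0e | ⟨T, hT⟩
    · have h0c : S0.card = 0 := by rw [h0e]; rfl
      omega
    · obtain ⟨z, _, _, hzX⟩ := W2' T hT C2 hC2
      have : X.card + 1 ≤ Fintype.card P := by
        have hsub : insert z X ⊆ univ := subset_univ _
        have := card_le_card hsub
        rw [card_insert_of_notMem hzX, Finset.card_univ] at this
        exact this
      omega
  · -- S1e nonempty, S2e empty
    have h2c : S2e.card = 0 := by rw [h2e]; rfl
    rcases S0.eq_empty_or_nonempty with h0e | ⟨T, hT⟩
    · have h0c : S0.card = 0 := by rw [h0e]; rfl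
      omega
    · obtain ⟨z, _, _, hzX⟩ := W2 T hT C1 hC1
      have : X.card + 1 ≤ Fintype.card P := by
        have hsub : insert z X ⊆ univ := subset_univ _
        have := card_le_card hsub
        rw [card_insert_of_notMem hzX, Finset.card_univ] at this
        exact this
      omega
  · -- both nonempty
    rcases S0.eq_empty_or_nonempty with h0e | ⟨T, hT⟩
    · have h0c : S0.card = 0 := by rw [h0e]; rfl
      obtain ⟨p, hpX⟩ := W4 C1 hC1 C2 hC2
      have : X.card + 1 ≤ Fintype.card P := by
        have hsub : insert p X ⊆ univ := subset_univ _
        have := card_le_card hsub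
        rw [card_insert_of_notMem hpX, Finset.card_univ] at this
        exact this
      omega
    · obtain ⟨z, hzA2, hzC1, hzX⟩ := W2 T hT C1 hC1
      obtain ⟨z', hzA1, _, hzX'⟩ := W2' T hT C2 hC2
      have hzz' : z ≠ z' := by
        intro h
        rw [hS1edef, mem_filter] at hC1
        exact hzC1 (h ▸ hC1.2.1.1 hzA1)
      have : X.card + 2 ≤ Fintype.card P := by
        have hzi : z ∉ insert z' X := by
          rw [mem_insert]
          push_neg
          exact ⟨hzz', hzX⟩
        have hsub : insert z (insert z' X) ⊆ univ := subset_univ _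
        have := card_le_card hsub
        rw [card_insert_of_notMem hzi, card_insert_of_notMem hzX', Finset.card_univ] at this
        omega
      omega
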